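/- (Pointwise limit of the localized penalty term.) Under the one-way ANOVA model with group proportions n_k/n → ρ_k ∈ (0,∞), fix u ∈ ℝ^K and a pair (k,ℓ) with β*_k ≠ β*_ℓ, and let λ_n > 0 satisfy λ_n n^{3/2} exp(−α √n |β*_k − β*_ℓ|^γ / 2) → 0. Then the localized penalty increment λ_n w^{FA}_{kℓ} ( |β*_k − β*_ℓ + (u_k − u_ℓ)/√n| − |β*_k − β*_ℓ| ) converges to 0 in probability as n → ∞. -/

import Mathlib

open MeasureTheory ProbabilityTheory Filter Finset
open scoped NNReal ENNReal

noncomputable section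

/-- Number of observations among the first `n` that belong to group `k`
(the group size `n_k`). -/
def groupSize {K : ℕ} (κ : ℕ → Fin K) (n : ℕ) (k : Fin K) : ℕ :=
  ((Finset.range n).filter fun i => κ i = k).card

/-- Empirical mean `ȳ_k` of group `k` among the first `n` observations. -/
def groupMean {Ω : Type*} {K : ℕ} (κ : ℕ → Fin K) (y : ℕ → Ω → ℝ)
    (n : ℕ) (k : Fin K) (ω : Ω) : ℝ :=
  (∑ i ∈ (Finset.range n).filter fun i => κ i = k, y i ω) / (groupSize κ n k : ℝ)

/-- The fused-ANOVA weight `w^FA_{kl} = n_k n_l exp(-α √n |ȳ_k - ȳ_l|^γ)`. -/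
def faWeight {Ω : Type*} {K : ℕ} (κ : ℕ → Fin K) (y : ℕ → Ω → ℝ) (α γ : ℝ)
    (n : ℕ) (k l : Fin K) (ω : Ω) : ℝ :=
  (groupSize κ n k : ℝ) * (groupSize κ n l : ℝ) *
    Real.exp (-(α * Real.sqrt (n : ℕ) * |groupMean κ y n k ω - groupMean κ y n l ω| ^ γ))


/-! Off the event that one of the group means `ȳ_k`, `ȳ_l` is `η / 2`-far from `β⋆_k`, `β⋆_l`,
continuity of `x ↦ |x| ^ γ` at `β⋆_k - β⋆_l ≠ 0` gives `|ȳ_k - ȳ_l| ^ γ ≥ |β⋆_k - β⋆_l| ^ γ / 2`,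
hence `w_{kl} ≤ n² exp(-α √n |β⋆_k - β⋆_l| ^ γ / 2)`. As the penalty increment is at most
`|u_k - u_l| / √n`, the term is then at most
`λ_n n^{3/2} exp(-α √n |β⋆_k - β⋆_l| ^ γ / 2) |u_k - u_l| → 0`. The excluded event has vanishing
probability by Chebyshev's inequality, since the group sizes grow linearly in `n`. -/

open scoped Topology

namespace ProbabilityTheory

variable {Ω ι β : Type*} {mΩ : MeasurableSpace Ω} {μ : Measure Ω}

theorem tendstoInMeasure_sum_div_card [IsFiniteMeasure μ] {X : ι → Ω → ℝ} {m v : ℝ}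
    (hL2 : ∀ i, MemLp (X i) 2 μ) (hindep : Pairwise fun i j => X i ⟂ᵢ[μ] X j)
    (hmean : ∀ i, μ[X i] = m) (hvar : ∀ i, Var[X i; μ] ≤ v)
    {l : Filter β} {F : β → Finset ι} (hF : Tendsto (fun n => #(F n)) l atTop) :
    TendstoInMeasure μ (fun n ω => (∑ i ∈ F n, X i ω) / #(F n)) l (fun _ => m) := by
  rw [tendstoInMeasure_iff_dist]
  intro δ hδ
  have hbound : ∀ᶠ n in l, μ {ω | δ ≤ dist ((∑ i ∈ F n, X i ω) / #(F n)) m}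
      ≤ ENNReal.ofReal (v / δ ^ 2 / #(F n)) := by
    filter_upwards [hF.eventually_gt_atTop 0] with n hn
    have hN : (0 : ℝ) < #(F n) := by exact_mod_cast hn
    have hS : MemLp (∑ i ∈ F n, X i) 2 μ := memLp_finsetSum' _ fun i _ => hL2 i
    have hSmean : μ[∑ i ∈ F n, X i] = #(F n) * m := by
      simp only [Finset.sum_apply]
      rw [integral_finsetSum _ fun i _ => (hL2 i).integrable one_le_two]
      simp [hmean]
    have hSvar : Var[∑ i ∈ F n, X i; μ] ≤ #(F n) * v := by
      rw [IndepFun.variance_sum (fun i _ => hL2 i) fun i _ j _ hij => hindep hij]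
      simpa using Finset.sum_le_sum fun i (_ : i ∈ F n) => hvar i
    calc μ {ω | δ ≤ dist ((∑ i ∈ F n, X i ω) / #(F n)) m}
        ≤ μ {ω | #(F n) * δ ≤ |(∑ i ∈ F n, X i) ω - μ[∑ i ∈ F n, X i]|} := by
          refine measure_mono fun ω (hω : δ ≤ |_ - m|) => ?_
          have hcentre : (∑ i ∈ F n, X i ω) - #(F n) * m
              = #(F n) * ((∑ i ∈ F n, X i ω) / #(F n) - m) := by field_simp
          show _ ≤ |(∑ i ∈ F n, X i) ω - μ[∑ i ∈ F n, X i]|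
          rw [hSmean, Finset.sum_apply, hcentre, abs_mul, abs_of_pos hN]
          exact mul_le_mul_of_nonneg_left hω hN.le
      _ ≤ ENNReal.ofReal (Var[∑ i ∈ F n, X i; μ] / (#(F n) * δ) ^ 2) :=
          meas_ge_le_variance_div_sq hS (by positivity)
      _ ≤ ENNReal.ofReal (v / δ ^ 2 / #(F n)) := by
          refine ENNReal.ofReal_le_ofReal ?_
          calc Var[∑ i ∈ F n, X i; μ] / (#(F n) * δ) ^ 2
              ≤ #(F n) * v / (#(F n) * δ) ^ 2 := by gcongr
            _ = v / δ ^ 2 / #(F n) := by field_simp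
  have hbound_tendsto : Tendsto (fun n => ENNReal.ofReal (v / δ ^ 2 / #(F n))) l (𝓝 0) := by
    simpa using ENNReal.tendsto_ofReal
      (tendsto_const_nhds.div_atTop (tendsto_natCast_atTop_atTop.comp hF))
  exact tendsto_of_tendsto_of_tendsto_of_le_of_le' tendsto_const_nhds hbound_tendsto
    (Eventually.of_forall fun _ => zero_le) hbound

end ProbabilityTheory

theorem Filter.Tendsto.atTop_of_div_natCast {a : ℕ → ℕ} {ρ : ℝ} (hρ : 0 < ρ)
    (h : Tendsto (fun n => (a n : ℝ) / n) atTop (𝓝 ρ)) : Tendsto a atTop atTop := by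
  rw [← tendsto_natCast_atTop_iff (R := ℝ)]
  refine (h.pos_mul_atTop hρ tendsto_natCast_atTop_atTop).congr' ?_
  filter_upwards [eventually_gt_atTop 0] with n hn
  field_simp

theorem MeasureTheory.tendstoInMeasure_zero_of_abs_le_of_notMem {Ω ι : Type*}
    {mΩ : MeasurableSpace Ω} {μ : Measure Ω} {l : Filter ι} {X : ι → Ω → ℝ} {C : ι → ℝ}
    {bad : ι → Set Ω} (hC : Tendsto C l (𝓝 0)) (hbad : Tendsto (fun n => μ (bad n)) l (𝓝 0))
    (hle : ∀ᶠ n in l, ∀ ω ∉ bad n, |X n ω| ≤ C n) :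
    TendstoInMeasure μ X l (fun _ => 0) := by
  rw [tendstoInMeasure_iff_dist]
  intro δ hδ
  refine tendsto_of_tendsto_of_tendsto_of_le_of_le' tendsto_const_nhds hbad
    (Eventually.of_forall fun _ => zero_le) ?_
  filter_upwards [hle, hC.eventually (gt_mem_nhds hδ)] with n hn hCδ
  refine measure_mono fun ω (hω : δ ≤ dist _ _) => ?_
  by_contra hgood
  rw [Real.dist_eq, sub_zero] at hω
  linarith [hn ω hgood]

theorem Real.rpow_three_halves {x : ℝ} (hx : 0 ≤ x) : x ^ (3 / 2 : ℝ) = x * √x := by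
  rw [Real.sqrt_eq_rpow, show (3 / 2 : ℝ) = 1 + 1 / 2 by norm_num,
    Real.rpow_add' hx (by norm_num), Real.rpow_one]

section FusedANOVA

variable {Ω : Type*} {K : ℕ} (κ : ℕ → Fin K)

theorem groupSize_le (n : ℕ) (k : Fin K) : groupSize κ n k ≤ n :=
  (card_filter_le _ _).trans_eq (card_range n)

variable (y : ℕ → Ω → ℝ) {α : ℝ} (γ : ℝ) (n : ℕ) (k l : Fin K) (ω : Ω)

theorem faWeight_nonneg : 0 ≤ faWeight κ y α γ n k l ω := by
  unfold faWeight
  positivity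

theorem faWeight_le_of_le_abs_groupMean_sub_rpow (hα : 0 ≤ α) {c : ℝ}
    (hc : c ≤ |groupMean κ y n k ω - groupMean κ y n l ω| ^ γ) :
    faWeight κ y α γ n k l ω ≤ n ^ 2 * Real.exp (-(α * √n * c)) := by
  unfold faWeight
  rw [sq]
  gcongr <;> exact_mod_cast groupSize_le κ n _

theorem abs_localizedPenalty_le {lam : ℝ} (hlam : 0 ≤ lam) (hα : 0 ≤ α) {c : ℝ}
    (hc : c ≤ |groupMean κ y n k ω - groupMean κ y n l ω| ^ γ) (b t : ℝ) :
    |lam * faWeight κ y α γ n k l ω * (|b + t / √n| - |b|)|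
      ≤ lam * (n : ℝ) ^ (3 / 2 : ℝ) * Real.exp (-(α * √n * c)) * |t| := by
  have hincrement : |(|b + t / √n| - |b|)| ≤ |t| / √n := by
    simpa [abs_div, abs_of_nonneg (Real.sqrt_nonneg _)] using
      abs_abs_sub_abs_le_abs_sub (b + t / √n) b
  calc |lam * faWeight κ y α γ n k l ω * (|b + t / √n| - |b|)|
      = lam * faWeight κ y α γ n k l ω * |(|b + t / √n| - |b|)| := by
        rw [abs_mul, abs_mul, abs_of_nonneg hlam, abs_of_nonneg (faWeight_nonneg κ y γ n k l ω)]
    _ ≤ lam * (n ^ 2 * Real.exp (-(α * √n * c))) * (|t| / √n) := by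
        gcongr
        exact faWeight_le_of_le_abs_groupMean_sub_rpow κ y γ n k l ω hα hc
    _ = lam * (n : ℝ) ^ (3 / 2 : ℝ) * Real.exp (-(α * √n * c)) * |t| := by
        have hpow : (n : ℝ) * √n = n ^ 2 / √n := by rw [sq, mul_div_assoc, Real.div_sqrt]
        rw [Real.rpow_three_halves n.cast_nonneg, hpow]
        ring

end FusedANOVA

theorem tendstoInMeasure_groupMean {Ω : Type*} {mΩ : MeasurableSpace Ω} {μ : Measure Ω}
    [IsProbabilityMeasure μ] {K : ℕ} {κ : ℕ → Fin K} {βstar : Fin K → ℝ} {ε : ℕ → Ω → ℝ}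
    {v : ℝ} (hL2 : ∀ i, MemLp (ε i) 2 μ) (hindep : Pairwise fun i j => ε i ⟂ᵢ[μ] ε j)
    (hmean : ∀ i, μ[ε i] = 0) (hvar : ∀ i, Var[ε i; μ] ≤ v)
    {y : ℕ → Ω → ℝ} (hy : y = fun i ω => βstar (κ i) + ε i ω) {k : Fin K}
    (hsize : Tendsto (fun n => groupSize κ n k) atTop atTop) :
    TendstoInMeasure μ (fun n => groupMean κ y n k) atTop (fun _ => βstar k) := by
  have hshiftL2 (i : ℕ) : MemLp (fun ω => βstar k + ε i ω) 2 μ :=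
    (memLp_const (βstar k)).add (hL2 i)
  have hshiftindep :
      Pairwise fun i j => (fun ω => βstar k + ε i ω) ⟂ᵢ[μ] (fun ω => βstar k + ε j ω) :=
    fun i j hij => (hindep hij).comp (measurable_const_add _) (measurable_const_add _)
  have hshiftmean (i : ℕ) : μ[fun ω => βstar k + ε i ω] = βstar k := by
    rw [integral_add (integrable_const _) ((hL2 i).integrable one_le_two), hmean]
    simp
  have hshifted := tendstoInMeasure_sum_div_card hshiftL2 hshiftindep hshiftmean
    (fun i => (variance_const_add (hL2 i).aestronglyMeasurable _).trans_le (hvar i)) hsize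
  convert hshifted using 3 with n ω
  subst hy
  rw [groupMean]
  congr 1
  exact sum_congr rfl fun i hi => by rw [(mem_filter.1 hi).2]

theorem fusedANOVA_localized_penalty_vanishes_on_nonfused_pair_general
    {Ω : Type*} [MeasureSpace Ω] [IsProbabilityMeasure (ℙ : Measure Ω)]
    {K : ℕ} (κ : ℕ → Fin K) (βstar : Fin K → ℝ) (ε : ℕ → Ω → ℝ)
    (hindep : iIndepFun ε ℙ)
    (hident : ∀ i, IdentDistrib (ε i) (ε 0) ℙ ℙ)
    (hL2 : MemLp (ε 0) 2 ℙ) (hmean : ∫ ω, ε 0 ω ∂ℙ = 0)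
    (σ : ℝ) (hvar : variance (ε 0) ℙ = σ ^ 2)
    (y : ℕ → Ω → ℝ) (hy : y = fun i ω => βstar (κ i) + ε i ω)
    (ρ : Fin K → ℝ) (hρ : ∀ k, 0 < ρ k)
    (hprop : ∀ k, Tendsto (fun n => (groupSize κ n k : ℝ) / n) atTop (nhds (ρ k)))
    (α γ : ℝ) (hα : 0 < α) (hγ : 0 < γ)
    (lam : ℕ → ℝ) (hlam : ∀ n, 0 < lam n)
    (u : Fin K → ℝ) (k l : Fin K) (hkl : βstar k ≠ βstar l)
    (hlam0 : Tendsto (fun n => lam n * (n : ℝ) ^ ((3 : ℝ) / 2) *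
        Real.exp (-(α * Real.sqrt n * |βstar k - βstar l| ^ γ) / 2)) atTop (nhds 0)) :
    TendstoInMeasure ℙ
      (fun n : ℕ => fun ω => lam n * faWeight κ y α γ n k l ω *
        (|βstar k - βstar l + (u k - u l) / Real.sqrt n| - |βstar k - βstar l|))
      atTop (fun _ => (0 : ℝ)) := by
  have hgroupMean (m : Fin K) : ∀ η > 0,
      Tendsto (fun n => ℙ {ω | η ≤ dist (groupMean κ y n m ω) (βstar m)}) atTop (𝓝 0) :=
    tendstoInMeasure_iff_dist.1 <| tendstoInMeasure_groupMean
      (fun i => (hident i).symm.memLp_snd hL2) (fun _ _ hij => hindep.indepFun hij)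
      (fun i => (hident i).integral_eq.trans hmean)
      (fun i => ((hident i).variance_eq.trans hvar).le)
      hy ((hprop m).atTop_of_div_natCast (hρ m))
  set b := βstar k - βstar l
  obtain ⟨η, hη, hnear⟩ : ∃ η > 0, ∀ x, dist x b < η → |b| ^ γ / 2 < |x| ^ γ :=
    Metric.eventually_nhds_iff.1 <|
      (continuous_abs.rpow_const fun _ => Or.inr hγ.le).continuousAt.eventually <|
        lt_mem_nhds <| half_lt_self <| Real.rpow_pos_of_pos (abs_pos.2 (sub_ne_zero.2 hkl)) γ
  refine tendstoInMeasure_zero_of_abs_le_of_notMem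
    (C := fun n => lam n * (n : ℝ) ^ (3 / 2 : ℝ) * Real.exp (-(α * √n * (|b| ^ γ / 2))) *
      |u k - u l|)
    (bad := fun n => {ω | η / 2 ≤ dist (groupMean κ y n k ω) (βstar k)} ∪
      {ω | η / 2 ≤ dist (groupMean κ y n l ω) (βstar l)}) ?_ ?_ ?_
  · simpa [neg_div, mul_div_assoc] using hlam0.mul_const |u k - u l|
  · exact tendsto_of_tendsto_of_tendsto_of_le_of_le tendsto_const_nhds
      (by simpa using (hgroupMean k _ (half_pos hη)).add (hgroupMean l _ (half_pos hη)))
      (fun _ => zero_le) (fun _ => measure_union_le _ _)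
  · refine Eventually.of_forall fun n ω hω => abs_localizedPenalty_le κ y γ n k l ω
      (hlam n).le hα.le (hnear _ ?_).le b (u k - u l)
    simp only [Set.mem_union, Set.mem_ofPred_eq, not_or, not_le] at hω
    linarith [dist_sub_sub_le (groupMean κ y n k ω) (groupMean κ y n l ω) (βstar k) (βstar l)]

/-- **Pointwise limit of the localized penalty term.**  For `u ∈ ℝ^K` and a pair
`(k, l)` with `β⋆_k ≠ β⋆_l`, if `λ_n n^{3/2} exp(-α √n |β⋆_k - β⋆_l|^γ / 2) → 0`, then
`λ_n w^FA_{kl} (|β⋆_k - β⋆_l + (u_k - u_l)/√n| - |β⋆_k - β⋆_l|) → 0` in probability. -/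
theorem fusedANOVA_localized_penalty_vanishes_on_nonfused_pair
    {Ω : Type*} [MeasureSpace Ω] [IsProbabilityMeasure (ℙ : Measure Ω)]
    {K : ℕ} (κ : ℕ → Fin K) (βstar : Fin K → ℝ) (ε : ℕ → Ω → ℝ)
    (hmeas : ∀ i, Measurable (ε i))
    (hindep : iIndepFun ε ℙ)
    (hident : ∀ i, IdentDistrib (ε i) (ε 0) ℙ ℙ)
    (hL2 : MemLp (ε 0) 2 ℙ) (hmean : ∫ ω, ε 0 ω ∂ℙ = 0)
    (σ : ℝ) (hσ : 0 < σ) (hvar : variance (ε 0) ℙ = σ ^ 2)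
    (y : ℕ → Ω → ℝ) (hy : y = fun i ω => βstar (κ i) + ε i ω)
    (ρ : Fin K → ℝ) (hρ : ∀ k, 0 < ρ k)
    (hprop : ∀ k, Tendsto (fun n => (groupSize κ n k : ℝ) / n) atTop (nhds (ρ k)))
    (α γ : ℝ) (hα : 0 < α) (hγ : 0 < γ)
    (lam : ℕ → ℝ) (hlam : ∀ n, 0 < lam n)
    (u : Fin K → ℝ) (k l : Fin K) (hkl : βstar k ≠ βstar l)
    (hlam0 : Tendsto (fun n => lam n * (n : ℝ) ^ ((3 : ℝ) / 2) *
        Real.exp (-(α * Real.sqrt n * |βstar k - βstar l| ^ γ) / 2)) atTop (nhds 0)) :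
    TendstoInMeasure ℙ
      (fun n : ℕ => fun ω => lam n * faWeight κ y α γ n k l ω *
        (|βstar k - βstar l + (u k - u l) / Real.sqrt n| - |βstar k - βstar l|))
      atTop (fun _ => (0 : ℝ)) :=
  fusedANOVA_localized_penalty_vanishes_on_nonfused_pair_general κ βstar ε hindep hident hL2 hmean σ
    hvar y hy ρ hρ hprop α γ hα hγ lam hlam u k l hkl hlam0
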